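/- (Primal feasibility for isotropic states.) On ℂ^d ⊗ ℂ^d, for every p with 1/d ≤ p < 1, the isotropic states satisfy the Loewner-order inequalities ρ_p ≤ p d · ρ_{1/d} and ρ_{1/d} ≤ ((d−1)/((1−p)d)) · ρ_p, where ρ_q := q Φ_d + (1−q)(I − Φ_d)/(d²−1). Consequently D_Ω(ρ_p ‖ ρ_{1/d}) ≤ log₂( p(d−1)/(1−p) ), and since ρ_{1/d} is separable, D_{Ω,SEP}(ρ_p) ≤ log₂( p(d−1)/(1−p) ). -/

import Mathlib

/-!
Both Loewner inequalities reduce to the signs of the coefficients of the complementary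
orthogonal projections `Φ_d` and `1 - Φ_d` in `λ ρ_q - ρ_p`, and a feasible `λ` in `ρ ≤ λ σ`
bounds `D_max(ρ‖σ)` by `log₂ λ`.

For separability write `ρ_{1/d} = (1 + d Φ_d) / (d (d + 1))`. Over the `4^d` phase vectors
`ψ_c = (i ^ c_j)_j`, the sum of `ψ_c ψ_c* ⊗ (ψ_c ψ_c*)ᵀ` (the transpose is the projection onto
the conjugate vector) equals `4^d (1 + d Φ_d - Σ_j |jj⟩⟨jj|)`, because a fourth moment of
independent uniform fourth roots of unity vanishes unless the indices pair up. Adding the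
product states `|jj⟩⟨jj|` exhibits `ρ_{1/d}` as a convex combination of product states.
-/

open scoped BigOperators ComplexOrder
open Filter Topology

noncomputable section

namespace QRT

open scoped Classical

variable {ι κ : Type*} [Fintype ι] [DecidableEq ι] [Fintype κ] [DecidableEq κ]

/-- A density matrix (quantum state): positive semidefinite with unit trace. -/
def IsState (ρ : Matrix ι ι ℂ) : Prop :=
  ρ.PosSemidef ∧ ρ.trace = 1

/-- Loewner order: `A ≤ B` iff `B - A` is positive semidefinite. -/
def Loewner (A B : Matrix ι ι ℂ) : Prop :=
  (B - A).PosSemidef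

/-- Trace norm (sum of singular values): `‖A‖₁ = Tr √(AᴴA)`. -/
def traceNorm (A : Matrix ι ι ℂ) : ℝ :=
  (((Matrix.posSemidef_conjTranspose_mul_self A).1.eigenvectorUnitary : Matrix ι ι ℂ) *
    Matrix.diagonal (((↑) : ℝ → ℂ) ∘ Real.sqrt ∘
      (Matrix.posSemidef_conjTranspose_mul_self A).1.eigenvalues) *
    (star (Matrix.posSemidef_conjTranspose_mul_self A).1.eigenvectorUnitary :
      Matrix ι ι ℂ)).trace.re

/-- The max-relative entropy `D_max(ρ‖σ)` (base 2); `+∞` if infeasible. -/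
def Dmax (ρ σ : Matrix ι ι ℂ) : EReal :=
  sInf {x : EReal | ∃ l : ℝ, 0 < l ∧ Loewner ρ (l • σ) ∧ x = ((Real.logb 2 l : ℝ) : EReal)}

/-- The projective relative entropy (Hilbert projective metric). -/
def DOmega (ρ σ : Matrix ι ι ℂ) : EReal :=
  Dmax ρ σ + Dmax σ ρ

/-- Support inclusion `supp ρ ⊆ supp σ` for positive semidefinite matrices,
expressed as kernel inclusion `ker σ ⊆ ker ρ`. -/
def SuppLe (ρ σ : Matrix ι ι ℂ) : Prop :=
  ∀ v : ι → ℂ, σ.mulVec v = 0 → ρ.mulVec v = 0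

/-- Application of a real function to a Hermitian matrix via the spectral decomposition. -/
def mfun (f : ℝ → ℝ) (A : Matrix ι ι ℂ) : Matrix ι ι ℂ :=
  if hA : A.IsHermitian then
    (hA.eigenvectorUnitary : Matrix ι ι ℂ) *
      Matrix.diagonal (fun i => (f (hA.eigenvalues i) : ℂ)) *
      (hA.eigenvectorUnitary : Matrix ι ι ℂ).conjTranspose
  else 0

/-- Base-2 matrix logarithm on the support of a positive semidefinite matrix. -/
def mlog2 (A : Matrix ι ι ℂ) : Matrix ι ι ℂ :=
  mfun (fun x => if x ≤ 0 then 0 else Real.logb 2 x) A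

/-- Umegaki quantum relative entropy (base 2):
`D(ρ‖σ) = Tr[ρ (log₂ ρ - log₂ σ)]` if `supp ρ ⊆ supp σ`, and `+∞` otherwise. -/
def Drel (ρ σ : Matrix ι ι ℂ) : EReal :=
  if SuppLe ρ σ then (((ρ * (mlog2 ρ - mlog2 σ)).trace.re : ℝ) : EReal) else ⊤

/-- Relative entropy of a resource: `D_F(ρ) = min_{σ ∈ F} D(ρ‖σ)`. -/
def DF (F : Set (Matrix ι ι ℂ)) (ρ : Matrix ι ι ℂ) : EReal :=
  sInf {x : EReal | ∃ σ ∈ F, x = Drel ρ σ}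

/-- Max-relative entropy of a resource. -/
def DmaxF (F : Set (Matrix ι ι ℂ)) (ρ : Matrix ι ι ℂ) : EReal :=
  sInf {x : EReal | ∃ σ ∈ F, x = Dmax ρ σ}

/-- Projective relative entropy of a resource: `D_{Ω,F}(ρ) = min_{σ ∈ F} D_Ω(ρ‖σ)`. -/
def DOmegaF (F : Set (Matrix ι ι ℂ)) (ρ : Matrix ι ι ℂ) : EReal :=
  sInf {x : EReal | ∃ σ ∈ F, x = DOmega ρ σ}

/-- Min-relative entropy of a resource for a pure state `ψ`:
`D_{min,F}(ψ) = min_{σ∈F} (-log₂⟨ψ|σ|ψ⟩)` where `⟨ψ|σ|ψ⟩ = Tr(ψσ)`. -/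
def DminF (F : Set (Matrix ι ι ℂ)) (ψ : Matrix ι ι ℂ) : EReal :=
  sInf {x : EReal | ∃ σ ∈ F, 0 < ((ψ * σ).trace).re ∧
    x = ((-(Real.logb 2 (((ψ * σ).trace).re)) : ℝ) : EReal)}

/-- The convex cone generated by a set of states. -/
def cone (F : Set (Matrix ι ι ℂ)) : Set (Matrix ι ι ℂ) :=
  {A | ∃ t : ℝ, 0 ≤ t ∧ ∃ σ ∈ F, A = t • σ}

/-- `D_s(ω‖σ) := inf { log₂ λ : λ > 0, λσ - ω ∈ cone(F) }`. -/
def Ds (F : Set (Matrix ι ι ℂ)) (ω σ : Matrix ι ι ℂ) : EReal :=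
  sInf {x : EReal | ∃ l : ℝ, 0 < l ∧ (l • σ - ω) ∈ cone F ∧ x = ((Real.logb 2 l : ℝ) : EReal)}

/-- The free variant of the projective relative entropy:
`D_{Ω,s,F}(ω) := min_{σ∈F} [ D_s(ω‖σ) + D_max(σ‖ω) ]`. -/
def DOmegasF (F : Set (Matrix ι ι ℂ)) (ω : Matrix ι ι ℂ) : EReal :=
  sInf {x : EReal | ∃ σ ∈ F, x = Ds F ω σ + Dmax σ ω}

/-- The standard robustness `R_{s,F}(ρ) := inf{ λ ≥ 0 : ∃ σ ∈ F, (ρ+λσ)/(1+λ) ∈ F }`,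
as an extended real (`+∞` if infeasible). -/
def Rs (F : Set (Matrix ι ι ℂ)) (ρ : Matrix ι ι ℂ) : EReal :=
  sInf {x : EReal | ∃ l : ℝ, 0 ≤ l ∧ (∃ σ ∈ F, ((1 + l)⁻¹ • (ρ + l • σ)) ∈ F) ∧
    x = ((l : ℝ) : EReal)}

/-- `log₂(1 + R_{s,F}(ρ))`, the logarithmic standard robustness. -/
def logRs (F : Set (Matrix ι ι ℂ)) (ρ : Matrix ι ι ℂ) : EReal :=
  sInf {x : EReal | ∃ l : ℝ, 0 ≤ l ∧ (∃ σ ∈ F, ((1 + l)⁻¹ • (ρ + l • σ)) ∈ F) ∧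
    x = ((Real.logb 2 (1 + l) : ℝ) : EReal)}

/-- The Choi matrix of a linear map on matrices. -/
def choi (Λ : Matrix ι ι ℂ →ₗ[ℂ] Matrix κ κ ℂ) : Matrix (ι × κ) (ι × κ) ℂ :=
  Matrix.of fun p q => Λ (Matrix.single p.1 q.1 1) p.2 q.2

/-- Complete positivity, via Choi's theorem. -/
def IsCP (Λ : Matrix ι ι ℂ →ₗ[ℂ] Matrix κ κ ℂ) : Prop :=
  (choi Λ).PosSemidef

/-- Trace non-increasing on positive semidefinite inputs. -/
def TraceNonincreasing (Λ : Matrix ι ι ℂ →ₗ[ℂ] Matrix κ κ ℂ) : Prop :=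
  ∀ A : Matrix ι ι ℂ, A.PosSemidef → ((Λ A).trace).re ≤ (A.trace).re

/-- Normalization `A ↦ A / Tr A`. -/
def normalize (A : Matrix ι ι ℂ) : Matrix ι ι ℂ :=
  (A.trace)⁻¹ • A

/-- A free probabilistic operation: a completely positive trace–non-increasing map
that sends free states of `F` to free states of `F'` after renormalization. -/
def IsFreeOp (F : Set (Matrix ι ι ℂ)) (F' : Set (Matrix κ κ ℂ))
    (Λ : Matrix ι ι ℂ →ₗ[ℂ] Matrix κ κ ℂ) : Prop :=
  IsCP Λ ∧ TraceNonincreasing Λ ∧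
    ∀ σ ∈ F, 0 < ((Λ σ).trace).re → normalize (Λ σ) ∈ F'

/-- `n`-fold tensor (Kronecker) power of a matrix, indexed by `Fin n → ι`. -/
def tpow (ρ : Matrix ι ι ℂ) (n : ℕ) : Matrix (Fin n → ι) (Fin n → ι) ℂ :=
  Matrix.of fun i j => ∏ k, ρ (i k) (j k)

/-- Tensor product of tensor-power-indexed matrices. -/
def tmul {n m : ℕ} (A : Matrix (Fin n → ι) (Fin n → ι) ℂ)
    (B : Matrix (Fin m → ι) (Fin m → ι) ℂ) :
    Matrix (Fin (n + m) → ι) (Fin (n + m) → ι) ℂ :=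
  Matrix.of fun i j =>
    A (fun k => i (Fin.castAdd m k)) (fun k => j (Fin.castAdd m k)) *
      B (fun k => i (Fin.natAdd n k)) (fun k => j (Fin.natAdd n k))

/-- Partial trace over the tensor factor in position `k`. -/
def ptrace {n : ℕ} (σ : Matrix (Fin (n + 1) → ι) (Fin (n + 1) → ι) ℂ) (k : Fin (n + 1)) :
    Matrix (Fin n → ι) (Fin n → ι) ℂ :=
  Matrix.of fun i j => ∑ x : ι, σ (k.insertNth x i) (k.insertNth x j)

/-- Axioms I–IV for a family of free-state sets on tensor powers of `ℂ^d`: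
convex closed sets of states, containing the powers of a full-rank free state,
closed under partial traces and under tensor products. -/
structure IsFreeFamily (d : ℕ)
    (F : ∀ n : ℕ, Set (Matrix (Fin n → Fin d) (Fin n → Fin d) ℂ)) : Prop where
  states : ∀ n, ∀ σ ∈ F n, IsState σ
  convex : ∀ n, Convex ℝ (F n)
  closed : ∀ n, IsClosed (F n)
  fullRank : ∃ σ : Matrix (Fin d) (Fin d) ℂ, IsState σ ∧ σ.PosDef ∧ ∀ n, tpow σ n ∈ F n
  ptrace_mem : ∀ n, ∀ σ ∈ F (n + 1), ∀ k : Fin (n + 1), ptrace σ k ∈ F n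
  tmul_mem : ∀ n m, ∀ σ ∈ F n, ∀ σ' ∈ F m, tmul σ σ' ∈ F (n + m)

variable {I K : ℕ → Type*} [∀ n, Fintype (I n)] [∀ n, DecidableEq (I n)]
  [∀ n, Fintype (K n)] [∀ n, DecidableEq (K n)]

/-- The smallest trace-distance error achievable when transforming `ρseq n` into
`ωseq ⌊rn⌋` by free probabilistic operations. -/
def convErr (F : ∀ n, Set (Matrix (I n) (I n) ℂ)) (F' : ∀ n, Set (Matrix (K n) (K n) ℂ))
    (ρseq : ∀ n, Matrix (I n) (I n) ℂ) (ωseq : ∀ n, Matrix (K n) (K n) ℂ)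
    (r : ℝ) (n : ℕ) : ℝ :=
  sInf {e : ℝ |
    ∃ Λ : Matrix (I n) (I n) ℂ →ₗ[ℂ] Matrix (K ⌊r * n⌋₊) (K ⌊r * n⌋₊) ℂ,
      IsFreeOp (F n) (F' ⌊r * n⌋₊) Λ ∧
      e = (1 / 2) * traceNorm (normalize (Λ (ρseq n)) - ωseq ⌊r * n⌋₊)}

/-- The probabilistic transformation rate `r_prob`, as an extended real. -/
def rprob (F : ∀ n, Set (Matrix (I n) (I n) ℂ)) (F' : ∀ n, Set (Matrix (K n) (K n) ℂ))
    (ρseq : ∀ n, Matrix (I n) (I n) ℂ) (ωseq : ∀ n, Matrix (K n) (K n) ℂ) : EReal :=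
  sSup {x : EReal | ∃ r : ℝ, 0 ≤ r ∧ x = (r : EReal) ∧
    Tendsto (fun n => convErr F F' ρseq ωseq r n) atTop (nhds 0)}

/-- The strong converse probabilistic transformation rate `r†_prob`. -/
def rprobSC (F : ∀ n, Set (Matrix (I n) (I n) ℂ)) (F' : ∀ n, Set (Matrix (K n) (K n) ℂ))
    (ρseq : ∀ n, Matrix (I n) (I n) ℂ) (ωseq : ∀ n, Matrix (K n) (K n) ℂ) : EReal :=
  sSup {x : EReal | ∃ r : ℝ, 0 ≤ r ∧ x = (r : EReal) ∧
    liminf (fun n => convErr F F' ρseq ωseq r n) atTop < 1}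

/-- A pure state `ψ = |v⟩⟨v|` with `‖v‖ = 1`. -/
def IsPure (ψ : Matrix ι ι ℂ) : Prop :=
  IsState ψ ∧ ∃ v : ι → ℂ, ψ = Matrix.of fun i j => v i * (starRingEnd ℂ) (v j)

/-- Tensor product across the A/B bipartition of `n`-copy bipartite operators. -/
def abProd {dA dB n : ℕ} (A : Matrix (Fin n → Fin dA) (Fin n → Fin dA) ℂ)
    (B : Matrix (Fin n → Fin dB) (Fin n → Fin dB) ℂ) :
    Matrix (Fin n → Fin dA × Fin dB) (Fin n → Fin dA × Fin dB) ℂ :=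
  Matrix.of fun i j =>
    A (fun k => (i k).1) (fun k => (j k).1) * B (fun k => (i k).2) (fun k => (j k).2)

/-- Separable states on `n` copies of a bipartite system `ℂ^{dA} ⊗ ℂ^{dB}`, with respect to
the bipartition grouping all `A` factors against all `B` factors. -/
def SEP (dA dB n : ℕ) :
    Set (Matrix (Fin n → Fin dA × Fin dB) (Fin n → Fin dA × Fin dB) ℂ) :=
  closure (convexHull ℝ {ρ | ∃ A B, IsState A ∧ IsState B ∧ ρ = abProd A B})

/-- Separable states on a single copy of `ℂ^{dA} ⊗ ℂ^{dB}`. -/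
def SEP1 (dA dB : ℕ) : Set (Matrix (Fin dA × Fin dB) (Fin dA × Fin dB) ℂ) :=
  closure (convexHull ℝ
    {ρ | ∃ (A : Matrix (Fin dA) (Fin dA) ℂ) (B : Matrix (Fin dB) (Fin dB) ℂ),
      IsState A ∧ IsState B ∧ ρ = Matrix.of fun p q => A p.1 q.1 * B p.2 q.2})

/-- Partial transpose on the second subsystem (single copy). -/
def ptrans1 {dA dB : ℕ} (M : Matrix (Fin dA × Fin dB) (Fin dA × Fin dB) ℂ) :
    Matrix (Fin dA × Fin dB) (Fin dA × Fin dB) ℂ :=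
  Matrix.of fun p q => M (p.1, q.2) (q.1, p.2)

/-- PPT states on a single copy. -/
def PPT1 (dA dB : ℕ) : Set (Matrix (Fin dA × Fin dB) (Fin dA × Fin dB) ℂ) :=
  {σ | IsState σ ∧ (ptrans1 σ).PosSemidef}

/-- Partial transpose over all `B` factors of an `n`-copy bipartite system. -/
def ptransN {dA dB n : ℕ}
    (M : Matrix (Fin n → Fin dA × Fin dB) (Fin n → Fin dA × Fin dB) ℂ) :
    Matrix (Fin n → Fin dA × Fin dB) (Fin n → Fin dA × Fin dB) ℂ :=
  Matrix.of fun i j => M (fun k => ((i k).1, (j k).2)) (fun k => ((j k).1, (i k).2))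

/-- PPT states on `n` copies, w.r.t. the bipartition grouping all `A` factors
against all `B` factors. -/
def PPTn (dA dB n : ℕ) :
    Set (Matrix (Fin n → Fin dA × Fin dB) (Fin n → Fin dA × Fin dB) ℂ) :=
  {σ | IsState σ ∧ (ptransN σ).PosSemidef}

/-- The maximally entangled state `Φ_d` on `ℂ^d ⊗ ℂ^d`. -/
def PhiMax (d : ℕ) : Matrix (Fin d × Fin d) (Fin d × Fin d) ℂ :=
  Matrix.of fun p q => if p.1 = p.2 ∧ q.1 = q.2 then ((d : ℂ))⁻¹ else 0

/-- The isotropic state `ρ_p = p Φ_d + (1-p)(I - Φ_d)/(d²-1)`. -/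
def iso (d : ℕ) (p : ℝ) : Matrix (Fin d × Fin d) (Fin d × Fin d) ℂ :=
  p • PhiMax d + ((1 - p) / ((d : ℝ) ^ 2 - 1)) • (1 - PhiMax d)

open scoped Matrix

theorem Dmax_le_logb {α : Type*} {ρ σ : Matrix α α ℂ} {l : ℝ} (hl : 0 < l)
    (h : Loewner ρ (l • σ)) : Dmax ρ σ ≤ (Real.logb 2 l : EReal) :=
  sInf_le ⟨l, hl, h, rfl⟩

theorem DOmega_le_logb_mul {α : Type*} {ρ σ : Matrix α α ℂ} {l l' : ℝ} (hl : 0 < l)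
    (hl' : 0 < l') (h : Loewner ρ (l • σ)) (h' : Loewner σ (l' • ρ)) :
    DOmega ρ σ ≤ (Real.logb 2 (l * l') : EReal) := by
  rw [Real.logb_mul hl.ne' hl'.ne', EReal.coe_add]
  exact add_le_add (Dmax_le_logb hl h) (Dmax_le_logb hl' h')

theorem DOmegaF_le_DOmega {α : Type*} {F : Set (Matrix α α ℂ)} {ρ σ : Matrix α α ℂ}
    (hσ : σ ∈ F) :
    DOmegaF F ρ ≤ DOmega ρ σ :=
  sInf_le ⟨σ, hσ, rfl⟩

section States

variable {α : Type*} [Fintype α]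

theorem IsState.transpose {ρ : Matrix α α ℂ} (h : IsState ρ) : IsState ρᵀ :=
  ⟨Matrix.posSemidef_transpose_iff.2 h.1, by rw [Matrix.trace_transpose, h.2]⟩

theorem isState_smul_vecMulVec {v : α → ℂ} {r : ℝ} (hr : 0 < r) (hv : v ⬝ᵥ star v = r) :
    IsState (r⁻¹ • Matrix.vecMulVec v (star v)) :=
  ⟨(Matrix.posSemidef_vecMulVec_self_star v).smul (inv_nonneg.2 hr.le), by
    rw [Matrix.trace_smul, Matrix.trace_vecMulVec, hv]; simp [hr.ne']⟩

theorem isState_diagonal_single [DecidableEq α] (j : α) :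
    IsState (Matrix.diagonal (Pi.single j 1)) :=
  ⟨Matrix.PosSemidef.diagonal (Pi.single_nonneg.2 zero_le_one), by simp [Matrix.trace_diagonal]⟩

end States

theorem smul_sum_add_smul_sum_mem_convexHull {E α β : Type*} [AddCommGroup E] [Module ℝ E]
    [Fintype α] [Fintype β] {s : Set E} {a b : ℝ} (ha : 0 ≤ a) (hb : 0 ≤ b)
    (hab : Fintype.card α * a + Fintype.card β * b = 1) {x : α → E} {y : β → E}
    (hx : ∀ i, x i ∈ s) (hy : ∀ j, y j ∈ s) :
    a • ∑ i, x i + b • ∑ j, y j ∈ convexHull ℝ s := by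
  have := (convex_convexHull ℝ s).sum_mem (t := Finset.univ)
    (w := Sum.elim (fun _ => a) fun _ => b) (z := Sum.elim x y)
    (by rintro (i | j) - <;> simpa) (by simpa [Fintype.sum_sum_type] using hab)
    (by rintro (i | j) - <;> apply subset_convexHull <;> simp [hx, hy])
  simpa [Fintype.sum_sum_type, Finset.smul_sum] using this

theorem sum_fin_four_I_pow_mul_neg_I_pow {a b : ℕ} (ha : a ≤ 2) (hb : b ≤ 2) :
    ∑ x : Fin 4, Complex.I ^ ((x : ℕ) * a) * (-Complex.I) ^ ((x : ℕ) * b) =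
      if a = b then 4 else 0 := by
  simp only [Fin.sum_univ_four]
  interval_cases a <;> interval_cases b <;> norm_num [Complex.ext_iff, pow_succ]

section Phases

variable {α : Type*} [Fintype α]

theorem pow_eq_prod_pow_mul_single [DecidableEq α] {M : Type*} [CommMonoid M] (z : M)
    (e : α → ℕ) (j : α) :
    z ^ e j = ∏ k, z ^ (e k * (Pi.single j 1 : α → ℕ) k) := by
  simp [Pi.single_apply]

def phaseVec (c : α → Fin 4) (j : α) : ℂ := Complex.I ^ (c j : ℕ)

theorem phaseVec_dotProduct_star (c : α → Fin 4) :
    phaseVec c ⬝ᵥ star (phaseVec c) = Fintype.card α := by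
  simp [dotProduct, phaseVec, ← mul_pow]

theorem phaseVec_mul_star_mul_eq_prod [DecidableEq α] (c : α → Fin 4) (a b a' b' : α) :
    phaseVec c a * star (phaseVec c b) * (phaseVec c a' * star (phaseVec c b')) =
      ∏ k, Complex.I ^ ((c k : ℕ) * (Pi.single a 1 + Pi.single a' 1 : α → ℕ) k) *
        (-Complex.I) ^ ((c k : ℕ) * (Pi.single b 1 + Pi.single b' 1 : α → ℕ) k) := by
  simp only [phaseVec, star_pow, Complex.star_def, Complex.conj_I, Pi.add_apply, mul_add, pow_add,
    Finset.prod_mul_distrib, ← pow_eq_prod_pow_mul_single]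
  ring

/-- Orthogonality of the characters `c ↦ i ^ c j`: a fourth moment of the random phase vector
survives only when the multisets `{a, a'}` and `{b, b'}` agree. -/
theorem sum_phaseVec_mul_star_mul [DecidableEq α] (a b a' b' : α) :
    ∑ c : α → Fin 4,
        phaseVec c a * star (phaseVec c b) * (phaseVec c a' * star (phaseVec c b')) =
      if (a = b ∧ a' = b') ∨ (a = b' ∧ a' = b) then 4 ^ Fintype.card α else 0 := by
  set A : α → ℕ := Pi.single a 1 + Pi.single a' 1
  set B : α → ℕ := Pi.single b 1 + Pi.single b' 1
  have hle : ∀ (x y : α) k, (Pi.single x 1 + Pi.single y 1 : α → ℕ) k ≤ 2 := by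
    intro x y k
    simp only [Pi.add_apply, Pi.single_apply]
    split_ifs <;> omega
  have hsum : ∀ k,
      ∑ x : Fin 4, Complex.I ^ ((x : ℕ) * A k) * (-Complex.I) ^ ((x : ℕ) * B k) =
        if A k = B k then 4 else 0 :=
    fun k => sum_fin_four_I_pow_mul_neg_I_pow (hle a a' k) (hle b b' k)
  simp_rw [phaseVec_mul_star_mul_eq_prod]
  rw [← Fintype.prod_sum fun k (x : Fin 4) =>
    Complex.I ^ ((x : ℕ) * A k) * (-Complex.I) ^ ((x : ℕ) * B k)]
  simp_rw [hsum, Fintype.prod_ite_zero, ← funext_iff, A, B,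
    Pi.single_add_single_eq_single_add_single one_ne_zero one_ne_zero]
  simp

end Phases

section Isotropic

open scoped MatrixOrder Kronecker

variable {d : ℕ}

theorem isStarProjection_PhiMax (d : ℕ) : IsStarProjection (PhiMax d) := by
  refine ⟨?_, ?_⟩
  · ext p q
    rcases eq_or_ne (d : ℂ) 0 with hd | hd
    · simp [PhiMax, Matrix.mul_apply, hd]
    by_cases hp : p.1 = p.2 <;> by_cases hq : q.1 = q.2 <;>
      simp [PhiMax, Matrix.mul_apply, Fintype.sum_prod_type, hp, hq, hd]
  · ext p q
    by_cases hp : p.1 = p.2 <;> by_cases hq : q.1 = q.2 <;> simp [PhiMax, hp, hq]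

theorem smul_iso_sub_iso (a q p : ℝ) :
    a • iso d q - iso d p =
      (a * q - p) • PhiMax d +
        ((a * (1 - q) - (1 - p)) / ((d : ℝ) ^ 2 - 1)) • (1 - PhiMax d) := by
  unfold iso
  match_scalars <;> ring

theorem loewner_iso_smul_iso (hd : 2 ≤ d) {a q p : ℝ} (hΦ : p ≤ a * q)
    (hΦc : 1 - p ≤ a * (1 - q)) : Loewner (iso d p) (a • iso d q) := by
  have hd' : (2 : ℝ) ≤ d := by exact_mod_cast hd
  have hP := isStarProjection_PhiMax d
  rw [Loewner, smul_iso_sub_iso]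
  exact ((Matrix.nonneg_iff_posSemidef.1 hP.nonneg).smul (sub_nonneg.2 hΦ)).add
    ((Matrix.nonneg_iff_posSemidef.1 hP.one_sub.nonneg).smul
      (div_nonneg (sub_nonneg.2 hΦc) (by nlinarith)))

theorem iso_le_smul_iso_inv (hd : 2 ≤ d) {p : ℝ} (hp : (d : ℝ)⁻¹ ≤ p) :
    Loewner (iso d p) ((p * d) • iso d (d : ℝ)⁻¹) := by
  have hd' : (0 : ℝ) < d := by positivity
  have hpd : 1 ≤ p * d := (inv_le_iff_one_le_mul₀ hd').1 hp
  refine loewner_iso_smul_iso hd (mul_inv_cancel_right₀ hd'.ne' p).ge ?_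
  rw [mul_one_sub, mul_inv_cancel_right₀ hd'.ne']
  linarith

theorem iso_inv_le_smul_iso (hd : 2 ≤ d) {p : ℝ} (hp : (d : ℝ)⁻¹ ≤ p) (hp1 : p < 1) :
    Loewner (iso d (d : ℝ)⁻¹) ((((d : ℝ) - 1) / ((1 - p) * d)) • iso d p) := by
  have hd' : (0 : ℝ) < d := by positivity
  have h1p : 0 < 1 - p := by linarith
  have hcoeff : ((d : ℝ) - 1) / ((1 - p) * d) * (1 - p) = 1 - (d : ℝ)⁻¹ := by field_simp
  have hpd : 1 ≤ p * d := (inv_le_iff_one_le_mul₀ hd').1 hp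
  refine loewner_iso_smul_iso hd ?_ hcoeff.ge
  rw [div_mul_eq_mul_div, le_div_iff₀ (by positivity), mul_comm, mul_inv_cancel_right₀ hd'.ne']
  linarith

theorem iso_inv_eq (hd : 2 ≤ d) :
    iso d (d : ℝ)⁻¹ = ((d : ℝ) * (d + 1))⁻¹ • (1 + (d : ℝ) • PhiMax d) := by
  have hd' : (2 : ℝ) ≤ d := by exact_mod_cast hd
  have hd2 : (d : ℝ) ^ 2 - 1 ≠ 0 := by nlinarith
  unfold iso
  match_scalars <;> field_simp <;> ring

/-- Twirling the product states `ψ_c ⊗ ψ̄_c` of the phase vectors reproduces `1 + d Φ_d` up to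
the diagonal, which the product states `|jj⟩⟨jj|` supply. -/
theorem one_add_smul_PhiMax_eq (hd : d ≠ 0) :
    1 + (d : ℝ) • PhiMax d =
      ∑ j, Matrix.diagonal (Pi.single j 1) ⊗ₖ Matrix.diagonal (Pi.single j 1) +
        ((4 : ℝ) ^ d)⁻¹ • ∑ c : Fin d → Fin 4,
          Matrix.vecMulVec (phaseVec c) (star (phaseVec c)) ⊗ₖ
            (Matrix.vecMulVec (phaseVec c) (star (phaseVec c)))ᵀ := by
  ext ⟨p₁, p₂⟩ ⟨q₁, q₂⟩
  simp only [Matrix.add_apply, Matrix.smul_apply, Matrix.sum_apply, Matrix.kroneckerMap_apply,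
    Matrix.transpose_apply, Matrix.vecMulVec_apply, Pi.star_apply, sum_phaseVec_mul_star_mul]
  simp only [Matrix.one_apply, Prod.mk.injEq, PhiMax, Matrix.of_apply, smul_ite, smul_zero,
    Complex.real_smul, Complex.ofReal_natCast, ne_eq, Nat.cast_eq_zero, hd, not_false_eq_true,
    mul_inv_cancel₀, Matrix.diagonal_apply, Pi.single_apply, mul_ite, mul_one, mul_zero,
    Finset.sum_ite_irrel, Finset.sum_ite_eq, Finset.mem_univ, ↓reduceIte, Finset.sum_const_zero,
    Fintype.card_fin, Complex.ofReal_inv, Complex.ofReal_pow, Complex.ofReal_ofNat,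
    pow_eq_zero_iff, OfNat.ofNat_ne_zero, inv_mul_cancel₀]
  split_ifs <;> grind

theorem iso_inv_eq_sum (hd : 2 ≤ d) :
    iso d (d : ℝ)⁻¹ =
      ((d : ℝ) * (d + 1))⁻¹ •
          ∑ j, Matrix.diagonal (Pi.single j 1) ⊗ₖ Matrix.diagonal (Pi.single j 1) +
        ((d : ℝ) / ((d + 1) * 4 ^ d)) • ∑ c : Fin d → Fin 4,
          ((d : ℝ)⁻¹ • Matrix.vecMulVec (phaseVec c) (star (phaseVec c))) ⊗ₖ
            ((d : ℝ)⁻¹ • Matrix.vecMulVec (phaseVec c) (star (phaseVec c)))ᵀ := by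
  have hd' : (d : ℝ) ≠ 0 := by positivity
  rw [iso_inv_eq hd, one_add_smul_PhiMax_eq (by omega), smul_add, smul_smul]
  simp only [Matrix.transpose_smul, Matrix.smul_kronecker, Matrix.kronecker_smul,
    ← Finset.smul_sum, smul_smul]
  congr 2
  field_simp

theorem iso_inv_mem_SEP1 (hd : 2 ≤ d) : iso d (d : ℝ)⁻¹ ∈ SEP1 d d := by
  have hd' : (0 : ℝ) < d := by positivity
  have hψ (c : Fin d → Fin 4) :
      IsState ((d : ℝ)⁻¹ • Matrix.vecMulVec (phaseVec c) (star (phaseVec c))) :=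
    isState_smul_vecMulVec hd' (by simpa using phaseVec_dotProduct_star c)
  rw [iso_inv_eq_sum hd]
  refine subset_closure (smul_sum_add_smul_sum_mem_convexHull (by positivity) (by positivity) ?_
    (fun j => ⟨_, _, isState_diagonal_single j, isState_diagonal_single j, rfl⟩)
    fun c => ⟨_, _, hψ c, (hψ c).transpose, rfl⟩)
  simp only [Fintype.card_fin, Fintype.card_pi, Finset.prod_const, Finset.card_univ,
    Nat.cast_pow, Nat.cast_ofNat]
  field_simp
  ring

end Isotropic

/-- **primal feasibility for isotropic states.**
For `1/d ≤ p < 1`, the isotropic states satisfy `ρ_p ≤ pd·ρ_{1/d}` and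
`ρ_{1/d} ≤ ((d-1)/((1-p)d))·ρ_p` in the Loewner order; consequently
`D_Ω(ρ_p‖ρ_{1/d}) ≤ log₂(p(d-1)/(1-p))`, and since `ρ_{1/d}` is separable,
`D_{Ω,SEP}(ρ_p) ≤ log₂(p(d-1)/(1-p))`. -/
theorem isotropic_primal_feasibility {d : ℕ} (hd : 2 ≤ d)
    (p : ℝ) (hp : (d : ℝ)⁻¹ ≤ p) (hp1 : p < 1) :
    Loewner (iso d p) ((p * (d : ℝ)) • iso d (d : ℝ)⁻¹) ∧
    Loewner (iso d (d : ℝ)⁻¹) ((((d : ℝ) - 1) / ((1 - p) * (d : ℝ))) • iso d p) ∧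
    DOmega (iso d p) (iso d (d : ℝ)⁻¹)
        ≤ ((Real.logb 2 (p * ((d : ℝ) - 1) / (1 - p)) : ℝ) : EReal) ∧
    DOmegaF (SEP1 d d) (iso d p)
        ≤ ((Real.logb 2 (p * ((d : ℝ) - 1) / (1 - p)) : ℝ) : EReal) := by
  have hd' : (2 : ℝ) ≤ d := by exact_mod_cast hd
  have hpd : 1 ≤ p * d := (inv_le_iff_one_le_mul₀ (by positivity)).1 hp
  have h₁ := iso_le_smul_iso_inv hd hp
  have h₂ := iso_inv_le_smul_iso hd hp hp1
  have hΩ : DOmega (iso d p) (iso d (d : ℝ)⁻¹) ≤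
      (Real.logb 2 (p * (d - 1) / (1 - p)) : EReal) := by
    convert DOmega_le_logb_mul (by positivity) (div_pos (by linarith) (by nlinarith)) h₁ h₂
      using 3
    field_simp
  exact ⟨h₁, h₂, hΩ, (DOmegaF_le_DOmega (iso_inv_mem_SEP1 hd)).trans hΩ⟩

end QRT
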